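/- arXiv:1512.05613 — 3 statements merged into one kernel-verified Lean document; each statement's English description precedes it below -/
import Mathlib

section
/- Let σ, τ > 0 and let h : ℝ → ℝ be differentiable with h'(t) ≥ τ/C for all t and some C ≥ 1. Suppose u : ℝ → ℝ is smooth with compact support and g = u' - σu. Then (τ/C + σ)·∫ e^{2h} u² dt ≤ ∫ e^{2h}(h' + σ) u² dt = -∫ e^{2h} u g dt ≤ (∫ e^{2h} g² dt)^{1/2} (∫ e^{2h} u² dt)^{1/2}, and hence (τ/C + σ)² ∫ e^{2h} u² dt ≤ ∫ e^{2h} g² dt. -/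
open Real MeasureTheory

theorem stmt5 (σ τ C : ℝ) (hσ : 0 < σ) (hτ : 0 < τ) (hC : 1 ≤ C)
    (h : ℝ → ℝ) (hhd : Differentiable ℝ h) (hh' : ∀ t, τ / C ≤ deriv h t)
    (u g : ℝ → ℝ) (hu : ContDiff ℝ (⊤ : ℕ∞) u) (hsupp : HasCompactSupport u)
    (hg : ∀ t, g t = deriv u t - σ * u t) :
    ((τ / C + σ) * ∫ t, Real.exp (2 * h t) * (u t)^2 ≤
        ∫ t, Real.exp (2 * h t) * (deriv h t + σ) * (u t)^2) ∧
    (∫ t, Real.exp (2 * h t) * (deriv h t + σ) * (u t)^2 =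
        -∫ t, Real.exp (2 * h t) * u t * g t) ∧
    (-∫ t, Real.exp (2 * h t) * u t * g t ≤
        Real.sqrt (∫ t, Real.exp (2 * h t) * (g t)^2) *
        Real.sqrt (∫ t, Real.exp (2 * h t) * (u t)^2)) ∧
    ((τ / C + σ)^2 * ∫ t, Real.exp (2 * h t) * (u t)^2 ≤
        ∫ t, Real.exp (2 * h t) * (g t)^2) := by
  have hgf : g = fun t => deriv u t - σ * u t := funext hg
  subst hgf
  -- basic continuity / differentiability
  have hud : Differentiable ℝ u := hu.differentiable (by simp)
  have huc : Continuous u := hud.continuous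
  have hu'c : Continuous (deriv u) := hu.continuous_deriv (by simp)
  have hhc : Continuous h := hhd.continuous
  have hCpos : (0:ℝ) < C := lt_of_lt_of_le one_pos hC
  have hk : 0 < τ / C + σ := add_pos (div_pos hτ hCpos) hσ
  have hh'pos : ∀ t, 0 < deriv h t := fun t => lt_of_lt_of_le (div_pos hτ hCpos) (hh' t)
  have hEc : Continuous (fun t => Real.exp (2 * h t)) :=
    Real.continuous_exp.comp (continuous_const.mul hhc)
  -- names for functions
  set F : ℝ → ℝ := fun t => Real.exp (2 * h t) * (u t)^2 with hFdef
  set P : ℝ → ℝ := fun t => 2 * Real.exp (2 * h t) * deriv h t * (u t)^2 with hPdef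
  set L : ℝ → ℝ := fun t => 2 * Real.exp (2 * h t) * (u t * deriv u t) with hLdef
  have hPnn : ∀ t, 0 ≤ P t := fun t => by
    have := (Real.exp_pos (2 * h t)).le
    have := (hh'pos t).le
    positivity
  have hF : ∀ x, HasDerivAt F (P x + L x) x := by
    intro x
    have h2 : HasDerivAt (fun t => Real.exp (2 * h t)) (Real.exp (2 * h x) * (2 * deriv h x)) x :=
      (((hhd x).hasDerivAt).const_mul 2).exp
    have h3 : HasDerivAt (fun t => (u t)^2) ((2:ℕ) * u x ^ (2-1) * deriv u x) x :=
      ((hud x).hasDerivAt).pow 2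
    have := h2.mul h3
    refine (this : HasDerivAt F _ x).congr_deriv ?_
    simp [hPdef, hLdef]
    ring
  -- support
  obtain ⟨r, hr0, hrsub⟩ := hsupp.isBounded.subset_ball_lt 0 0
  rw [Real.ball_eq_Ioo] at hrsub
  simp only [zero_sub, zero_add] at hrsub
  have hu0 : ∀ t, t ∉ Set.Ioo (-r) r → u t = 0 := fun t ht =>
    image_eq_zero_of_notMem_tsupport (fun hmem => ht (hrsub hmem))
  have hu'0 : ∀ t, t ∉ Set.Ioo (-r) r → deriv u t = 0 := fun t ht => by
    by_contra hne
    exact ht (hrsub (support_deriv_subset (Function.mem_support.2 hne)))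
  -- compact supports and integrability of continuous pieces
  have hcsF : HasCompactSupport F :=
    HasCompactSupport.intro hsupp.isCompact (fun x hx => by
      simp [hFdef, image_eq_zero_of_notMem_tsupport hx])
  have Iu : Integrable F := (hEc.mul (huc.pow 2)).integrable_of_hasCompactSupport hcsF
  have hLc : Continuous L := (continuous_const.mul hEc).mul (huc.mul hu'c)
  have hcsL : HasCompactSupport L :=
    HasCompactSupport.intro hsupp.isCompact (fun x hx => by
      simp [hLdef, image_eq_zero_of_notMem_tsupport hx])
  have IL : Integrable L := hLc.integrable_of_hasCompactSupport hcsL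
  -- integrability of P via nonneg derivative
  set G : ℝ → ℝ := fun x => ∫ t in (0:ℝ)..x, L t with hGdef
  have hG : ∀ x, HasDerivAt G (L x) x := fun x => (hLc.integral_hasStrictDerivAt 0 x).hasDerivAt
  have hφ : ∀ x, HasDerivAt (fun t => F t - G t) (P x) x := by
    intro x
    have := (hF x).sub (hG x)
    refine (this : HasDerivAt (fun t => F t - G t) _ x).congr_deriv ?_
    ring
  have IPIoc : IntegrableOn P (Set.Ioc (-r) r) := by
    apply intervalIntegral.integrableOn_deriv_of_nonneg
      (fun x _ => ((hφ x).continuousAt.continuousWithinAt))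
      (fun x _ => hφ x) (fun x _ => hPnn x)
  have IP : Integrable P := by
    apply IPIoc.integrable_of_forall_notMem_eq_zero
    intro x hx
    have : u x = 0 := hu0 x (fun hmem => hx (Set.Ioo_subset_Ioc_self hmem))
    simp [hPdef, this]
  have IPL : Integrable (fun t => P t + L t) := IP.add IL
  -- the integral of the derivative vanishes
  have key : ∫ t, (P t + L t) = 0 := by
    have hsub : Function.support (fun t => P t + L t) ⊆ Set.Ioc (-r) r := by
      intro x hx
      by_contra hxn
      have h1 : u x = 0 := hu0 x (fun hmem => hxn (Set.Ioo_subset_Ioc_self hmem))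
      exact hx (by simp [hPdef, hLdef, h1])
    rw [← intervalIntegral.integral_eq_integral_of_support_subset hsub]
    rw [intervalIntegral.integral_eq_sub_of_hasDerivAt (fun x _ => hF x)
      IPL.intervalIntegrable]
    have h1 : u r = 0 := hu0 r (by simp)
    have h2 : u (-r) = 0 := hu0 (-r) (by simp [hr0.le])
    simp [hFdef, h1, h2]
  -- integrability of main integrands
  have ILHS : Integrable (fun t => Real.exp (2 * h t) * (deriv h t + σ) * (u t)^2) := by
    have heq : (fun t => Real.exp (2 * h t) * (deriv h t + σ) * (u t)^2)
        = fun t => (2:ℝ)⁻¹ * P t + σ * F t := by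
      funext t; simp only [hPdef, hFdef]; ring
    rw [heq]
    exact (IP.const_mul _).add (Iu.const_mul _)
  have Iug : Integrable (fun t => Real.exp (2 * h t) * u t * (deriv u t - σ * u t)) := by
    have heq : (fun t => Real.exp (2 * h t) * u t * (deriv u t - σ * u t))
        = fun t => (2:ℝ)⁻¹ * L t - σ * F t := by
      funext t; simp only [hLdef, hFdef]; ring
    rw [heq]
    exact (IL.const_mul _).sub (Iu.const_mul _)
  have Ig : Integrable (fun t => Real.exp (2 * h t) * (deriv u t - σ * u t)^2) := by
    apply Continuous.integrable_of_hasCompactSupport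
    · exact hEc.mul ((hu'c.sub (continuous_const.mul huc)).pow 2)
    · apply HasCompactSupport.intro hsupp.isCompact
      intro x hx
      have h1 : u x = 0 := image_eq_zero_of_notMem_tsupport hx
      have h2 : deriv u x = 0 := by
        by_contra hne
        exact hx (support_deriv_subset (Function.mem_support.2 hne))
      simp [h1, h2]
  -- Part 2
  have part2 : ∫ t, Real.exp (2 * h t) * (deriv h t + σ) * (u t)^2 =
      -∫ t, Real.exp (2 * h t) * u t * (deriv u t - σ * u t) := by
    have hsum : (∫ t, Real.exp (2 * h t) * (deriv h t + σ) * (u t)^2)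
        + ∫ t, Real.exp (2 * h t) * u t * (deriv u t - σ * u t) = 0 := by
      rw [← integral_add ILHS Iug]
      have heq : (fun t => Real.exp (2 * h t) * (deriv h t + σ) * (u t)^2
          + Real.exp (2 * h t) * u t * (deriv u t - σ * u t))
          = fun t => (2:ℝ)⁻¹ * (P t + L t) := by
        funext t; simp only [hPdef, hLdef]; ring
      rw [heq, MeasureTheory.integral_const_mul, key, mul_zero]
    linarith
  -- Part 1
  have part1 : (τ / C + σ) * ∫ t, Real.exp (2 * h t) * (u t)^2 ≤
      ∫ t, Real.exp (2 * h t) * (deriv h t + σ) * (u t)^2 := by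
    rw [← MeasureTheory.integral_const_mul]
    apply integral_mono (Iu.const_mul _) ILHS
    intro t
    have h1 : (0:ℝ) ≤ Real.exp (2 * h t) * (u t)^2 :=
      mul_nonneg (Real.exp_pos _).le (sq_nonneg _)
    calc (τ / C + σ) * (Real.exp (2 * h t) * (u t)^2)
        = (Real.exp (2 * h t) * (u t)^2) * (τ / C + σ) := by ring
      _ ≤ (Real.exp (2 * h t) * (u t)^2) * (deriv h t + σ) :=
          mul_le_mul_of_nonneg_left (by linarith [hh' t]) h1
      _ = Real.exp (2 * h t) * (deriv h t + σ) * (u t)^2 := by ring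
  -- Part 3 : Cauchy-Schwarz
  have hBnn : 0 ≤ ∫ t, Real.exp (2 * h t) * (deriv u t - σ * u t)^2 :=
    integral_nonneg (fun t => mul_nonneg (Real.exp_pos _).le (sq_nonneg _))
  have hAnn : 0 ≤ ∫ t, Real.exp (2 * h t) * (u t)^2 :=
    integral_nonneg (fun t => mul_nonneg (Real.exp_pos _).le (sq_nonneg _))
  have part3 : -∫ t, Real.exp (2 * h t) * u t * (deriv u t - σ * u t) ≤
      Real.sqrt (∫ t, Real.exp (2 * h t) * (deriv u t - σ * u t)^2) *
      Real.sqrt (∫ t, Real.exp (2 * h t) * (u t)^2) := by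
    have hconj : Real.HolderConjugate 2 2 := Real.HolderConjugate.two_two
    set f1 : ℝ → ℝ := fun t => Real.exp (h t) * |deriv u t - σ * u t| with hf1def
    set f2 : ℝ → ℝ := fun t => Real.exp (h t) * |u t| with hf2def
    have hf1c : Continuous f1 :=
      (Real.continuous_exp.comp hhc).mul (hu'c.sub (continuous_const.mul huc)).abs
    have hf2c : Continuous f2 := (Real.continuous_exp.comp hhc).mul huc.abs
    have hf1cs : HasCompactSupport f1 := by
      apply HasCompactSupport.intro hsupp.isCompact
      intro x hx
      have h1 : u x = 0 := image_eq_zero_of_notMem_tsupport hx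
      have h2 : deriv u x = 0 := by
        by_contra hne
        exact hx (support_deriv_subset (Function.mem_support.2 hne))
      simp [hf1def, h1, h2]
    have hf2cs : HasCompactSupport f2 := by
      apply HasCompactSupport.intro hsupp.isCompact
      intro x hx
      simp [hf2def, image_eq_zero_of_notMem_tsupport hx]
    have hmem1 : MemLp f1 (ENNReal.ofReal 2) := hf1c.memLp_of_hasCompactSupport hf1cs
    have hmem2 : MemLp f2 (ENNReal.ofReal 2) := hf2c.memLp_of_hasCompactSupport hf2cs
    have hH := MeasureTheory.integral_mul_le_Lp_mul_Lq_of_nonneg hconj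
      (Filter.Eventually.of_forall (fun t => mul_nonneg (Real.exp_pos _).le (abs_nonneg _)))
      (Filter.Eventually.of_forall (fun t => mul_nonneg (Real.exp_pos _).le (abs_nonneg _)))
      hmem1 hmem2
    have hsq1 : ∀ t, f1 t ^ (2:ℝ) = Real.exp (2 * h t) * (deriv u t - σ * u t)^2 := by
      intro t
      rw [show ((2:ℝ)) = ((2:ℕ):ℝ) by norm_num, Real.rpow_natCast]
      simp only [hf1def]
      rw [mul_pow, sq_abs, ← Real.exp_nat_mul]
    have hsq2 : ∀ t, f2 t ^ (2:ℝ) = Real.exp (2 * h t) * (u t)^2 := by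
      intro t
      rw [show ((2:ℝ)) = ((2:ℕ):ℝ) by norm_num, Real.rpow_natCast]
      simp only [hf2def]
      rw [mul_pow, sq_abs, ← Real.exp_nat_mul]
    change ∫ t, f1 t * f2 t ≤ (∫ t, f1 t ^ (2:ℝ)) ^ (1/(2:ℝ)) * (∫ t, f2 t ^ (2:ℝ)) ^ (1/(2:ℝ)) at hH
    simp only [hsq1, hsq2] at hH
    have hbound : -∫ t, Real.exp (2 * h t) * u t * (deriv u t - σ * u t)
        ≤ ∫ t, f1 t * f2 t := by
      have hle : ∀ t, -(Real.exp (2 * h t) * u t * (deriv u t - σ * u t)) ≤ f1 t * f2 t := by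
        intro t
        have : f1 t * f2 t = Real.exp (2 * h t) * |u t * (deriv u t - σ * u t)| := by
          simp only [hf1def, hf2def]
          rw [abs_mul, show Real.exp (2 * h t) = Real.exp (h t) * Real.exp (h t) by
            rw [← Real.exp_add]; ring_nf]
          ring
        rw [this]
        have h1 := neg_abs_le (u t * (deriv u t - σ * u t))
        have h2 := (Real.exp_pos (2 * h t)).le
        nlinarith [abs_nonneg (u t * (deriv u t - σ * u t))]
      rw [← integral_neg]
      exact integral_mono Iug.neg
        ((hf1c.mul hf2c).integrable_of_hasCompactSupport hf1cs.mul_right) hle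
    calc -∫ t, Real.exp (2 * h t) * u t * (deriv u t - σ * u t)
        ≤ ∫ t, f1 t * f2 t := hbound
      _ ≤ (∫ t, Real.exp (2 * h t) * (deriv u t - σ * u t)^2) ^ ((1:ℝ)/2) *
          (∫ t, Real.exp (2 * h t) * (u t)^2) ^ ((1:ℝ)/2) := hH
      _ = _ := by rw [Real.sqrt_eq_rpow, Real.sqrt_eq_rpow]
  -- Part 4
  have chain : (τ / C + σ) * ∫ t, Real.exp (2 * h t) * (u t)^2 ≤
      Real.sqrt (∫ t, Real.exp (2 * h t) * (deriv u t - σ * u t)^2) *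
      Real.sqrt (∫ t, Real.exp (2 * h t) * (u t)^2) :=
    part1.trans (part2.le.trans part3)
  have part4 : (τ / C + σ)^2 * ∫ t, Real.exp (2 * h t) * (u t)^2 ≤
      ∫ t, Real.exp (2 * h t) * (deriv u t - σ * u t)^2 := by
    set A := ∫ t, Real.exp (2 * h t) * (u t)^2
    set B := ∫ t, Real.exp (2 * h t) * (deriv u t - σ * u t)^2
    rcases eq_or_lt_of_le hAnn with hA0 | hApos
    · rw [← hA0, mul_zero]; exact hBnn
    · have h1 : Real.sqrt A * Real.sqrt A = A := Real.mul_self_sqrt hAnn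
      have h2 : Real.sqrt B * Real.sqrt B = B := Real.mul_self_sqrt hBnn
      have hsA : 0 < Real.sqrt A := Real.sqrt_pos.2 hApos
      have h3 : (τ / C + σ) * Real.sqrt A ≤ Real.sqrt B :=
        le_of_mul_le_mul_right (by nlinarith) hsA
      nlinarith [mul_le_mul h3 h3 (by positivity) (Real.sqrt_nonneg B)]
  exact ⟨part1, part2, part3, part4⟩
end

section
/- Let σ ∈ ℝ and let h : ℝ → ℝ be twice continuously differentiable. Suppose v : ℝ → ℝ is smooth with compact support and satisfies v' - (h' - σ)v = G. Then ‖(h'-σ)v‖²_{L²} + (1/2)∫ h'' v² dt ≤ ‖G‖_{L²}·‖(h'-σ)v‖_{L²}, and consequently ∫ h'' v² dt ≤ ‖G‖²_{L²}. -/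
open Real MeasureTheory

set_option maxHeartbeats 1000000 in
theorem stmt6 (σ : ℝ) (h : ℝ → ℝ) (hh : ContDiff ℝ 2 h)
    (hconv : ∀ t, 0 ≤ deriv (deriv h) t)
    (v G : ℝ → ℝ) (hv : ContDiff ℝ (⊤ : ℕ∞) v) (hsupp : HasCompactSupport v)
    (hG : ∀ t, G t = deriv v t - (deriv h t - σ) * v t) :
    ((∫ t, ((deriv h t - σ) * v t)^2) +
        (1/2) * ∫ t, deriv (deriv h) t * (v t)^2 ≤
      Real.sqrt (∫ t, (G t)^2) * Real.sqrt (∫ t, ((deriv h t - σ) * v t)^2)) ∧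
    (∫ t, deriv (deriv h) t * (v t)^2) ≤ ∫ t, (G t)^2 := by
  -- regularity
  have hh2 : ContDiff ℝ ((1 : ℕ) + 1) h := by exact_mod_cast hh
  have hh' : ContDiff ℝ 1 (deriv h) := by exact_mod_cast (contDiff_succ_iff_deriv.mp hh2).2.2
  have hch' : Continuous (deriv h) := hh'.continuous
  have hch'' : Continuous (deriv (deriv h)) := hh'.continuous_deriv le_rfl
  have hcv : Continuous v := hv.continuous
  have hv1 : ContDiff ℝ 1 v := hv.of_le (by simp)
  have hv' : ContDiff ℝ 1 (deriv v) := by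
    have hv2 : ContDiff ℝ ((1 : ℕ) + 1) v := hv.of_le (WithTop.coe_le_coe.mpr le_top)
    exact_mod_cast (contDiff_succ_iff_deriv.mp hv2).2.2
  have hcv' : Continuous (deriv v) := hv'.continuous
  set w : ℝ → ℝ := fun t => (deriv h t - σ) * v t with hwdef
  have hcw : Continuous w := (hch'.sub continuous_const).mul hcv
  have hsw : HasCompactSupport w := hsupp.mul_left
  have hGeq : G = fun t => deriv v t - w t := funext hG
  have hcG : Continuous G := by rw [hGeq]; exact hcv'.sub hcw
  have hsG : HasCompactSupport G := by
    rw [hGeq]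
    apply hsupp.mono'
    intro t ht
    by_contra hmem
    have hv0 : v t = 0 := image_eq_zero_of_notMem_tsupport hmem
    have hd0 : deriv v t = 0 := by
      by_contra hd
      exact hmem (support_deriv_subset hd)
    simp only [Function.mem_support, ne_eq, hwdef] at ht
    exact ht (by simp [hv0, hd0])
  have hsv2 : HasCompactSupport (fun t => (v t) ^ 2) :=
    hsupp.comp_left (g := fun x => x ^ 2) (by simp)
  -- integrable terms
  have intw2 : Integrable (fun t => (w t) ^ 2) :=
    (hcw.fun_pow 2).integrable_of_hasCompactSupport
      (hsw.comp_left (g := fun x => x ^ 2) (by simp))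
  have intG2 : Integrable (fun t => (G t) ^ 2) :=
    (hcG.fun_pow 2).integrable_of_hasCompactSupport
      (hsG.comp_left (g := fun x => x ^ 2) (by simp))
  have intGw : Integrable (fun t => G t * w t) :=
    (hcG.mul hcw).integrable_of_hasCompactSupport hsw.mul_left
  have inth2 : Integrable (fun t => deriv (deriv h) t * (v t) ^ 2) :=
    (hch''.mul (hcv.fun_pow 2)).integrable_of_hasCompactSupport hsv2.mul_left
  have intvw : Integrable (fun t => deriv v t * w t) :=
    (hcv'.mul hcw).integrable_of_hasCompactSupport hsw.mul_left
  -- integration by parts : ∫ deriv F = 0 where F = (h' - σ) * v^2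
  set F : ℝ → ℝ := fun t => (deriv h t - σ) * (v t) ^ 2 with hFdef
  have hF : ContDiff ℝ 1 F := (hh'.sub contDiff_const).mul (hv1.pow 2)
  have hsF : HasCompactSupport F := hsv2.mul_left
  have hderF : ∀ t, deriv F t
      = deriv (deriv h) t * (v t) ^ 2 + 2 * (deriv v t * w t) := by
    intro t
    have h1 : HasDerivAt (fun t => deriv h t - σ) (deriv (deriv h) t) t :=
      ((hh'.differentiable one_ne_zero t).hasDerivAt).sub_const σ
    have h2 : HasDerivAt (fun t => (v t) ^ 2)
        ((2 : ℕ) * v t ^ (2 - 1) * deriv v t) t :=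
      ((hv.differentiable (by simp) t).hasDerivAt).pow 2
    have := (h1.fun_mul h2).deriv
    rw [this, hwdef]
    push_cast
    ring
  have hintF : Integrable (deriv F) :=
    (hF.continuous_deriv le_rfl).integrable_of_hasCompactSupport hsF.deriv
  have key : ∫ t, deriv F t = 0 := by
    rw [← intervalIntegral.integral_Iic_add_Ioi (b := 0) hintF.integrableOn hintF.integrableOn,
      hsF.integral_Iic_deriv_eq hF, hsF.integral_Ioi_deriv_eq hF]
    ring
  have ibp : ∫ t, deriv v t * w t = -(1/2) * ∫ t, deriv (deriv h) t * (v t) ^ 2 := by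
    have h0 : ∫ t, (deriv (deriv h) t * (v t) ^ 2 + 2 * (deriv v t * w t)) = 0 := by
      rw [← key]
      exact integral_congr_ae (Filter.Eventually.of_forall fun t => (hderF t).symm)
    rw [integral_add inth2 (intvw.const_mul 2), integral_const_mul] at h0
    linarith
  -- the basic identity : ∫ G w = ∫ v' w - ∫ w²
  have hGwid : ∫ t, G t * w t
      = (-(1/2) * ∫ t, deriv (deriv h) t * (v t) ^ 2) - ∫ t, (w t) ^ 2 := by
    rw [← ibp, ← integral_sub intvw intw2]
    apply integral_congr_ae
    filter_upwards with t
    rw [hG t]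
    ring
  -- Cauchy–Schwarz
  have hCS : ∫ t, |G t| * |w t|
      ≤ (∫ t, |G t| ^ (2:ℝ)) ^ ((1:ℝ)/2) * (∫ t, |w t| ^ (2:ℝ)) ^ ((1:ℝ)/2) := by
    refine integral_mul_le_Lp_mul_Lq_of_nonneg ⟨by norm_num, by norm_num, by norm_num⟩
      (Filter.Eventually.of_forall fun t => abs_nonneg _)
      (Filter.Eventually.of_forall fun t => abs_nonneg _) ?_ ?_
    · exact hcG.abs.memLp_of_hasCompactSupport hsG.abs
    · exact hcw.abs.memLp_of_hasCompactSupport hsw.abs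
  have e2 : ((2:ℝ)) = ((2 : ℕ) : ℝ) := by norm_num
  have eG : ∫ t, |G t| ^ (2:ℝ) = ∫ t, (G t) ^ 2 := by
    apply integral_congr_ae; filter_upwards with t
    rw [e2, Real.rpow_natCast, sq_abs]
  have ew : ∫ t, |w t| ^ (2:ℝ) = ∫ t, (w t) ^ 2 := by
    apply integral_congr_ae; filter_upwards with t
    rw [e2, Real.rpow_natCast, sq_abs]
  rw [eG, ew, ← Real.sqrt_eq_rpow, ← Real.sqrt_eq_rpow] at hCS
  have habs : -(∫ t, G t * w t) ≤ ∫ t, |G t| * |w t| := by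
    calc -(∫ t, G t * w t) ≤ |∫ t, G t * w t| := neg_le_abs _
    _ = ‖∫ t, G t * w t‖ := (Real.norm_eq_abs _).symm
    _ ≤ ∫ t, ‖G t * w t‖ := norm_integral_le_integral_norm _
    _ = ∫ t, |G t| * |w t| := by
        apply integral_congr_ae; filter_upwards with t
        rw [Real.norm_eq_abs, abs_mul]
  have part1 : (∫ t, (w t) ^ 2) + (1/2) * ∫ t, deriv (deriv h) t * (v t) ^ 2
      ≤ Real.sqrt (∫ t, (G t) ^ 2) * Real.sqrt (∫ t, (w t) ^ 2) := by
    have := hGwid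
    nlinarith [hCS, habs]
  refine ⟨part1, ?_⟩
  -- second part via AM-GM
  have hA : 0 ≤ ∫ t, (G t) ^ 2 := integral_nonneg fun t => sq_nonneg _
  have hB : 0 ≤ ∫ t, (w t) ^ 2 := integral_nonneg fun t => sq_nonneg _
  have hsqA := Real.sq_sqrt hA
  have hsqB := Real.sq_sqrt hB
  nlinarith [part1, sq_nonneg (Real.sqrt (∫ t, (G t) ^ 2) - Real.sqrt (∫ t, (w t) ^ 2))]
end

section
/- Let h : ℝ → ℝ be C¹ with 0 < h' ≤ Cτ, and let w : ℝⁿ → ℝ be smooth with compact support in ℝⁿ \ {0} satisfying -Δw + Kτ²|x|^{-2}w = f with K ≥ 4C². Then ∫ e^{2h(-ln|x|)} τ²|w|²|x|^{-2} dx ≤ C' ∫ e^{2h(-ln|x|)} |x|²|f|²/τ² dx for a constant C' depending only on C and K, obtained by multiplying the equation by e^{2h(-ln|x|)}w and integrating by parts, absorbing the cross term |∇(e^{h})| ≤ Cτ|x|^{-1}e^{h} into the potential term. -/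
open Real MeasureTheory

lemma phi_hasFDerivAt {n : ℕ} (h : ℝ → ℝ) (hh : ContDiff ℝ 1 h)
    {x : EuclideanSpace ℝ (Fin n)} (hx : x ≠ 0) :
    HasFDerivAt (fun y : EuclideanSpace ℝ (Fin n) => Real.exp (2 * h (-Real.log ‖y‖)))
      ((-2 * deriv h (-Real.log ‖x‖) * ‖x‖⁻¹^2 * Real.exp (2 * h (-Real.log ‖x‖))) • innerSL ℝ x) x := by
  have hnx : ‖x‖ ≠ 0 := norm_ne_zero_iff.mpr hx
  have hs : (‖x‖:ℝ)^2 ≠ 0 := pow_ne_zero _ hnx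
  set Φ : ℝ → ℝ := fun s => Real.exp (2 * h (-(Real.log s / 2))) with hΦ
  have key : ∀ y : EuclideanSpace ℝ (Fin n), Real.exp (2 * h (-Real.log ‖y‖)) = Φ (‖y‖^2) := by
    intro y
    simp only [hΦ, Real.log_pow]
    norm_num
  have hN : HasFDerivAt (fun y : EuclideanSpace ℝ (Fin n) => ‖y‖^2) (2 • (innerSL ℝ) x) x :=
    (hasStrictFDerivAt_norm_sq x).hasFDerivAt
  have hlog : HasDerivAt (fun s : ℝ => -(Real.log s / 2)) (-((‖x‖^2)⁻¹/2)) (‖x‖^2) :=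
    ((Real.hasDerivAt_log hs).div_const 2).neg
  have hhd : HasDerivAt h (deriv h (-(Real.log (‖x‖^2)/2))) (-(Real.log (‖x‖^2)/2)) :=
    (hh.differentiable one_ne_zero _).hasDerivAt
  have hΦd : HasDerivAt Φ (Real.exp (2 * h (-(Real.log (‖x‖^2)/2))) *
      (2 * (deriv h (-(Real.log (‖x‖^2)/2)) * (-((‖x‖^2)⁻¹/2))))) (‖x‖^2) :=
    ((HasDerivAt.comp (x := ‖x‖^2) hhd hlog).const_mul 2).exp
  have comp := hΦd.comp_hasFDerivAt x hN
  have heq : (fun y : EuclideanSpace ℝ (Fin n) => Real.exp (2 * h (-Real.log ‖y‖)))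
      = Φ ∘ (fun y => ‖y‖^2) := by
    funext y; exact key y
  rw [heq]
  have hlx : -(Real.log (‖x‖^2)/2) = -Real.log ‖x‖ := by
    rw [Real.log_pow]; push_cast; ring
  rw [hlx] at comp
  refine comp.congr_fderiv ?_
  ext v
  simp only [ContinuousLinearMap.smul_apply, innerSL_apply_apply, smul_eq_mul,
    two_smul, ContinuousLinearMap.add_apply]
  rw [key x, ← inv_pow]
  ring


lemma scalar_ineq (C K τ δ φx hp r u ww S Q L ftx : ℝ)
    (hδdef : δ = K - C^2) (hδ : 0 < δ) (hτ0 : 0 < τ)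
    (hr : 0 < r) (hu : 0 < u) (hur : u * r = 1) (hφx : 0 < φx) (hp0 : 0 < hp) (hpC : hp ≤ C*τ)
    (hQ0 : 0 ≤ Q) (hS2 : S^2 ≤ r^2*Q)
    (hL : L = K*τ^2*u^2*ww - ftx) :
    (δ/2) * (φx * τ^2 * ww^2 * u^2) ≤
      ((-2*hp*u^2*φx) * (ww*S) + φx*Q + φx*(ww*L)) + (1/(2*δ)) * (φx*r^2*ftx^2/τ^2) := by
  have hC2 : 0 < C * τ := lt_of_lt_of_le hp0 hpC
  -- step A
  have ht2 : (2*hp*u^2*ww*S)^2 ≤ 4 * Q * ((C*τ)^2*u^2*ww^2) := by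
    have h1 : hp^2 ≤ (C*τ)^2 := by nlinarith
    have e3 : 4*hp^2*u^4*ww^2*S^2 ≤ 4*hp^2*u^4*ww^2*(r^2*Q) := by
      apply mul_le_mul_of_nonneg_left hS2
      positivity
    have e5 : 4*hp^2*u^2*ww^2*Q ≤ 4*(C*τ)^2*u^2*ww^2*Q := by
      have h6 : (0:ℝ) ≤ u^2*ww^2*Q := by positivity
      nlinarith
    calc (2*hp*u^2*ww*S)^2 = 4*hp^2*u^4*ww^2*S^2 := by ring
      _ ≤ 4*hp^2*u^4*ww^2*(r^2*Q) := e3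
      _ = 4*hp^2*u^2*ww^2*Q * (u*r)^2 := by ring
      _ = 4*hp^2*u^2*ww^2*Q := by rw [hur]; ring
      _ ≤ 4*(C*τ)^2*u^2*ww^2*Q := e5
      _ = 4 * Q * ((C*τ)^2*u^2*ww^2) := by ring
  have hb0 : (0:ℝ) ≤ (C*τ)^2*u^2*ww^2 := by positivity
  have hstepA : (2*hp*u^2*ww*S) ≤ Q + (C*τ)^2*u^2*ww^2 := by
    nlinarith [ht2, hQ0, hb0, sq_nonneg (Q - (C*τ)^2*u^2*ww^2),
      sq_nonneg (Q + (C*τ)^2*u^2*ww^2 - 2*hp*u^2*ww*S)]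
  -- step B
  have hstepB : 2*δ*τ^2*(ww*ftx) ≤ δ^2*τ^4*u^2*ww^2 + r^2*ftx^2 := by
    have h7 : δ^2*τ^4*u^2*ww^2 + r^2*ftx^2 - 2*δ*τ^2*(ww*ftx)*(u*r)
        = (δ*τ^2*u*ww - r*ftx)^2 := by ring
    rw [hur] at h7
    have h8 := sq_nonneg (δ*τ^2*u*ww - r*ftx)
    linarith [h7.ge.trans_eq rfl]
  have hstepB' : ww*ftx ≤ δ*τ^2*u^2*ww^2/2 + r^2*ftx^2/(2*δ*τ^2) := by
    rw [div_add_div _ _ (two_ne_zero) (by positivity : (2*δ*τ^2:ℝ) ≠ 0),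
      le_div_iff₀ (by positivity)]
    nlinarith [hstepB]
  have ee : (1/(2*δ))*(φx*r^2*ftx^2/τ^2) = φx * (r^2*ftx^2/(2*δ*τ^2)) := by
    field_simp
  rw [hL, ee]
  have key : (δ/2) * (τ^2 * ww^2 * u^2) ≤
      (-(2*hp*u^2*ww*S) + Q + ww*(K*τ^2*u^2*ww - ftx)) + r^2*ftx^2/(2*δ*τ^2) := by
    have hKδ : K = δ + C^2 := by rw [hδdef]; ring
    rw [hKδ]
    linarith [hstepA, hstepB']
  calc (δ/2) * (φx * τ^2 * ww^2 * u^2) = φx * ((δ/2) * (τ^2 * ww^2 * u^2)) := by ring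
    _ ≤ φx * ((-(2*hp*u^2*ww*S) + Q + ww*(K*τ^2*u^2*ww - ftx)) + r^2*ftx^2/(2*δ*τ^2)) :=
        mul_le_mul_of_nonneg_left key hφx.le
    _ = ((-2*hp*u^2*φx) * (ww*S) + φx*Q + φx*(ww*(K*τ^2*u^2*ww - ftx)))
        + φx * (r^2*ftx^2/(2*δ*τ^2)) := by ring

theorem stmt16 (n : ℕ) (hn : 2 ≤ n) (C K τ : ℝ) (hC : 0 < C)
    (hK : 4 * C^2 ≤ K) (hτ : 1 ≤ τ) :
    ∃ C' : ℝ, 0 < C' ∧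
      ∀ (h : ℝ → ℝ), ContDiff ℝ 1 h → (∀ t, 0 < deriv h t ∧ deriv h t ≤ C * τ) →
      ∀ (w f : EuclideanSpace ℝ (Fin n) → ℝ),
        ContDiff ℝ (⊤ : ℕ∞) w → HasCompactSupport w →
        tsupport w ⊆ {x : EuclideanSpace ℝ (Fin n) | x ≠ 0} →
        (∀ x : EuclideanSpace ℝ (Fin n), x ≠ 0 →
          -(∑ i, fderiv ℝ (fun y => fderiv ℝ w y (EuclideanSpace.single i 1)) x
              (EuclideanSpace.single i 1)) + K * τ^2 * ‖x‖⁻¹^2 * w x = f x) →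
        (∫ x, Real.exp (2 * h (-Real.log ‖x‖)) * τ^2 * (w x)^2 * ‖x‖⁻¹^2) ≤
          C' * ∫ x, Real.exp (2 * h (-Real.log ‖x‖)) * ‖x‖^2 * (f x)^2 / τ^2 := by
  classical
  set δ : ℝ := K - C^2 with hδdef
  have hδ : 0 < δ := by nlinarith
  have hτ0 : 0 < τ := lt_of_lt_of_le one_pos hτ
  refine ⟨1/δ^2, by positivity, ?_⟩
  intro h hh hh' w f hw hwcs hsupp heq
  set φ : EuclideanSpace ℝ (Fin n) → ℝ := fun x => Real.exp (2 * h (-Real.log ‖x‖)) with hφdef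
  have hφpos : ∀ x, 0 < φ x := fun x => Real.exp_pos _
  set e : Fin n → EuclideanSpace ℝ (Fin n) := fun i => EuclideanSpace.single i 1 with hedef
  set d : Fin n → EuclideanSpace ℝ (Fin n) → ℝ := fun i x => fderiv ℝ w x (e i) with hddef
  set dd : Fin n → EuclideanSpace ℝ (Fin n) → ℝ := fun i x => fderiv ℝ (fun y => fderiv ℝ w y (e i)) x (e i) with hdddef
  set ft : EuclideanSpace ℝ (Fin n) → ℝ := fun x => -(∑ i, dd i x) + K * τ^2 * ‖x‖⁻¹^2 * w x with hftdef
  set F : Fin n → EuclideanSpace ℝ (Fin n) → ℝ := fun i x => φ x * (w x * d i x) with hFdef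
  set G : EuclideanSpace ℝ (Fin n) → ℝ := fun x => ∑ i, fderiv ℝ (F i) x (e i) with hGdef
  set η : EuclideanSpace ℝ (Fin n) → ℝ := fun x => φ x * τ^2 * (w x)^2 * ‖x‖⁻¹^2 with hηdef
  set ψ : EuclideanSpace ℝ (Fin n) → ℝ := fun x => φ x * ‖x‖^2 * (ft x)^2 / τ^2 with hψdef
  -- basic facts about the support
  have hUopen : IsOpen (tsupport w)ᶜ := (isClosed_tsupport w).isOpen_compl
  have hw0 : ∀ x ∉ tsupport w, w x = 0 := fun x hx => image_eq_zero_of_notMem_tsupport hx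
  have hwev : ∀ x ∉ tsupport w, w =ᶠ[nhds x] (fun _ => (0:ℝ)) := by
    intro x hx
    filter_upwards [hUopen.mem_nhds hx] with y hy using hw0 y hy
  have hd0 : ∀ x ∉ tsupport w, ∀ i, d i x = 0 := by
    intro x hx i
    have h1 : fderiv ℝ w x = fderiv ℝ (fun _ => (0:ℝ)) x := (hwev x hx).fderiv_eq
    simp only [hddef, h1, fderiv_const_apply]
    rfl
  have hdev : ∀ x ∉ tsupport w, ∀ i, (fun y => fderiv ℝ w y (e i)) =ᶠ[nhds x] (fun _ => (0:ℝ)) := by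
    intro x hx i
    filter_upwards [hUopen.mem_nhds hx] with y hy
    have h1 : fderiv ℝ w y = fderiv ℝ (fun _ => (0:ℝ)) y := (hwev y hy).fderiv_eq
    simp only [h1, fderiv_const_apply]
    rfl
  have hdd0 : ∀ x ∉ tsupport w, ∀ i, dd i x = 0 := by
    intro x hx i
    have h1 : fderiv ℝ (fun y => fderiv ℝ w y (e i)) x = fderiv ℝ (fun _ => (0:ℝ)) x :=
      (hdev x hx i).fderiv_eq
    simp only [hdddef, h1, fderiv_const_apply]
    rfl
  have hFev : ∀ x ∉ tsupport w, ∀ i, F i =ᶠ[nhds x] (fun _ => (0:ℝ)) := by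
    intro x hx i
    filter_upwards [hUopen.mem_nhds hx] with y hy
    simp [hFdef, hw0 y hy]
  have hx0 : ∀ x ∈ tsupport w, x ≠ (0:EuclideanSpace ℝ (Fin n)) := fun x hx => hsupp hx
  -- smoothness of d i
  have hdsm : ∀ i, ContDiff ℝ (⊤ : ℕ∞) (d i) := by
    intro i
    exact (hw.fderiv_right (by simp)).clm_apply (contDiff_const (c := e i))
  -- φ is C¹ away from 0
  have hφC1 : ∀ x : EuclideanSpace ℝ (Fin n), x ≠ 0 → ContDiffAt ℝ 1 φ x := by
    intro x hx
    have h1 : ContDiffAt ℝ 1 (fun y : EuclideanSpace ℝ (Fin n) => ‖y‖) x := contDiffAt_norm ℝ hx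
    have h2 : ContDiffAt ℝ 1 Real.log ‖x‖ := Real.contDiffAt_log.mpr (norm_ne_zero_iff.mpr hx)
    have h3 : ContDiffAt ℝ 1 (fun y : EuclideanSpace ℝ (Fin n) => Real.log ‖y‖) x := h2.comp x h1
    have h4 : ContDiffAt ℝ 1 (fun y : EuclideanSpace ℝ (Fin n) => 2 * h (-Real.log ‖y‖)) x :=
      ((hh.contDiffAt.comp x h3.neg).const_smul (2:ℝ))
    exact (Real.contDiff_exp.contDiffAt.comp x h4)
  -- F i is C¹ with compact support
  have hFC1 : ∀ i, ContDiff ℝ 1 (F i) := by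
    intro i
    rw [contDiff_iff_contDiffAt]
    intro x
    by_cases hx : x ∈ tsupport w
    · exact (hφC1 x (hx0 x hx)).mul
        ((hw.of_le (by simp)).contDiffAt.mul ((hdsm i).of_le (by simp)).contDiffAt)
    · exact contDiffAt_const.congr_of_eventuallyEq (hFev x hx i)
  have hFcs : ∀ i, HasCompactSupport (F i) := by
    intro i
    apply HasCompactSupport.intro hwcs
    intro x hx
    simp [hFdef, hw0 x hx]
  have hFdiff : ∀ i, Differentiable ℝ (F i) := fun i => (hFC1 i).differentiable one_ne_zero
  have hdFcont : ∀ i, Continuous (fun x => fderiv ℝ (F i) x (e i)) := by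
    intro i
    exact ((hFC1 i).continuous_fderiv one_ne_zero).clm_apply continuous_const
  have hdF0 : ∀ x ∉ tsupport w, ∀ i, fderiv ℝ (F i) x (e i) = 0 := by
    intro x hx i
    have h1 : fderiv ℝ (F i) x = fderiv ℝ (fun _ => (0:ℝ)) x := (hFev x hx i).fderiv_eq
    simp only [h1, fderiv_const_apply]
    rfl
  have hdFcs : ∀ i, HasCompactSupport (fun x => fderiv ℝ (F i) x (e i)) := by
    intro i
    exact HasCompactSupport.intro hwcs (fun x hx => hdF0 x hx i)
  have hFcont : ∀ i, Continuous (F i) := fun i => (hFC1 i).continuous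
  have hdFint : ∀ i, Integrable (fun x => fderiv ℝ (F i) x (e i)) :=
    fun i => (hdFcont i).integrable_of_hasCompactSupport (hdFcs i)
  have hFint : ∀ i, Integrable (F i) :=
    fun i => (hFcont i).integrable_of_hasCompactSupport (hFcs i)
  -- integration by parts: the integral of each derivative vanishes
  have hibp : ∀ i, ∫ x, fderiv ℝ (F i) x (e i) = 0 := by
    intro i
    have hz : (fun x : EuclideanSpace ℝ (Fin n) =>
        fderiv ℝ (fun _ => (1:ℝ)) x (e i) * F i x) = fun _ => 0 := by
      funext x; simp [fderiv_const_apply]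
    have h1 := integral_mul_fderiv_eq_neg_fderiv_mul_of_integrable (μ := volume)
      (f := fun _ => (1:ℝ)) (g := F i) (v := e i)
      (by rw [hz]; exact integrable_zero _ _ _)
      (by simpa using hdFint i)
      (by simpa using hFint i)
      (fun x _ => differentiableAt_const 1) (fun x _ => hFdiff i x)
    rw [hz] at h1
    simpa using h1
  have hGint : Integrable G := by
    rw [hGdef]
    exact integrable_finset_sum _ (fun i _ => hdFint i)
  have hGzero : ∫ x, G x = 0 := by
    rw [hGdef, integral_finset_sum _ (fun i _ => hdFint i)]
    simp [hibp]
  -- continuity of second derivatives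
  have hddcont : ∀ i, Continuous (dd i) := by
    intro i
    have : ContDiff ℝ (⊤ : ℕ∞) (fun x => fderiv ℝ (fun y => fderiv ℝ w y (e i)) x (e i)) :=
      ((hdsm i).fderiv_right (by simp)).clm_apply (contDiff_const (c := e i))
    exact this.continuous
  have hφcont : ∀ x : EuclideanSpace ℝ (Fin n), x ≠ 0 → ContinuousAt φ x :=
    fun x hx => (hφC1 x hx).continuousAt
  have hinvcont : ∀ x : EuclideanSpace ℝ (Fin n), x ≠ 0 →
      ContinuousAt (fun y : EuclideanSpace ℝ (Fin n) => ‖y‖⁻¹^2) x := by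
    intro x hx
    exact ((continuous_norm.continuousAt).inv₀ (norm_ne_zero_iff.mpr hx)).pow 2
  -- η : continuity, compact support, integrability
  have hηcont : Continuous η := by
    rw [continuous_iff_continuousAt]
    intro x
    by_cases hx : x ∈ tsupport w
    · have hx0' : x ≠ 0 := hx0 x hx
      exact (((hφcont x hx0').mul continuousAt_const).mul
        ((hw.continuous.continuousAt).pow 2)).mul (hinvcont x hx0')
    · apply continuousAt_const.congr_of_eventuallyEq (f := fun _ => (0:ℝ))
      filter_upwards [hUopen.mem_nhds hx] with y hy
      simp [hηdef, hw0 y hy]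
  have hηcs : HasCompactSupport η :=
    HasCompactSupport.intro hwcs (fun x hx => by simp [hηdef, hw0 x hx])
  have hηint : Integrable η := hηcont.integrable_of_hasCompactSupport hηcs
  -- ft : vanishes off the support, continuity, compact support
  have hft0 : ∀ x ∉ tsupport w, ft x = 0 := by
    intro x hx
    simp [hftdef, hdd0 x hx, hw0 x hx]
  have hftcont : Continuous ft := by
    rw [continuous_iff_continuousAt]
    intro x
    by_cases hx : x ∈ tsupport w
    · have hx0' : x ≠ 0 := hx0 x hx
      apply ContinuousAt.add
      · exact ((continuous_finset_sum _ (fun i _ => hddcont i)).continuousAt).neg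
      · exact (continuousAt_const.mul (hinvcont x hx0')).mul (hw.continuous.continuousAt)
    · apply continuousAt_const.congr_of_eventuallyEq (f := fun _ => (0:ℝ))
      filter_upwards [hUopen.mem_nhds hx] with y hy
      simp [hftdef, hdd0 y hy, hw0 y hy]
  -- ψ : continuity, compact support, integrability
  have hψcont : Continuous ψ := by
    rw [continuous_iff_continuousAt]
    intro x
    by_cases hx : x ∈ tsupport w
    · have hx0' : x ≠ 0 := hx0 x hx
      exact (((hφcont x hx0').mul ((continuous_norm.continuousAt).pow 2)).mul
        ((hftcont.continuousAt).pow 2)).div_const _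
    · apply continuousAt_const.congr_of_eventuallyEq (f := fun _ => (0:ℝ))
      filter_upwards [hUopen.mem_nhds hx] with y hy
      simp [hψdef, hft0 y hy]
  have hψcs : HasCompactSupport ψ :=
    HasCompactSupport.intro hwcs (fun x hx => by simp [hψdef, hft0 x hx])
  have hψint : Integrable ψ := hψcont.integrable_of_hasCompactSupport hψcs
  -- the pointwise inequality
  have hPW : ∀ x, (δ/2) * η x ≤ G x + (1/(2*δ)) * ψ x := by
    intro x
    by_cases hx : x ∈ tsupport w
    · -- main case
      have hx0' : x ≠ 0 := hx0 x hx
      have hr : 0 < ‖x‖ := norm_pos_iff.mpr hx0'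
      have hur : ‖x‖⁻¹ * ‖x‖ = 1 := inv_mul_cancel₀ (ne_of_gt hr)
      have hu : 0 < ‖x‖⁻¹ := inv_pos.mpr hr
      have hp0 : 0 < deriv h (-Real.log ‖x‖) := (hh' _).1
      have hpC : deriv h (-Real.log ‖x‖) ≤ C * τ := (hh' _).2
      have hφd : HasFDerivAt φ
          ((-2 * deriv h (-Real.log ‖x‖) * ‖x‖⁻¹^2 * φ x) • innerSL ℝ x) x :=
        phi_hasFDerivAt h hh hx0'
      -- derivative of each F i
      have hterm : ∀ i, fderiv ℝ (F i) x (e i)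
          = (-2 * deriv h (-Real.log ‖x‖) * ‖x‖⁻¹^2 * φ x) * (x i) * (w x * d i x)
            + φ x * (d i x * d i x + w x * dd i x) := by
        intro i
        have hwd : HasFDerivAt w (fderiv ℝ w x) x := (hw.differentiable (by simp) x).hasFDerivAt
        have hdd' : HasFDerivAt (d i) (fderiv ℝ (d i) x) x :=
          ((hdsm i).differentiable (by simp) x).hasFDerivAt
        have hprod : HasFDerivAt (F i)
            (φ x • (w x • fderiv ℝ (d i) x + d i x • fderiv ℝ w x)
              + (w x * d i x) • ((-2 * deriv h (-Real.log ‖x‖) * ‖x‖⁻¹^2 * φ x)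
                  • innerSL ℝ x)) x := hφd.mul (hwd.mul hdd')
        rw [hprod.fderiv]
        have h1 : fderiv ℝ (d i) x (e i) = dd i x := rfl
        have h2 : fderiv ℝ w x (e i) = d i x := rfl
        have h3 : (innerSL ℝ x) (e i) = x i := by
          simp [hedef, EuclideanSpace.inner_single_right, real_inner_comm]
        simp only [ContinuousLinearMap.add_apply, ContinuousLinearMap.smul_apply,
          smul_eq_mul, h1, h2, h3]
        ring
      have hGx : G x = (-2 * deriv h (-Real.log ‖x‖) * ‖x‖⁻¹^2 * φ x)
            * (w x * ∑ i, x i * d i x)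
          + φ x * (∑ i, (d i x)^2) + φ x * (w x * ∑ i, dd i x) := by
        have h0 : G x = ∑ i, fderiv ℝ (F i) x (e i) := rfl
        rw [h0]
        calc ∑ i, fderiv ℝ (F i) x (e i)
            = ∑ i, ((-2 * deriv h (-Real.log ‖x‖) * ‖x‖⁻¹^2 * φ x) * (x i) * (w x * d i x)
                + φ x * (d i x * d i x + w x * dd i x)) :=
              Finset.sum_congr rfl fun i _ => hterm i
          _ = ∑ i, (((-2 * deriv h (-Real.log ‖x‖) * ‖x‖⁻¹^2 * φ x) * w x) * (x i * d i x)
                + (φ x * (d i x)^2 + (φ x * w x) * dd i x)) :=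
              Finset.sum_congr rfl fun i _ => by rw [pow_two]; ring
          _ = ((-2 * deriv h (-Real.log ‖x‖) * ‖x‖⁻¹^2 * φ x) * w x) * (∑ i, x i * d i x)
                + ((φ x) * (∑ i, (d i x)^2) + (φ x * w x) * (∑ i, dd i x)) := by
              rw [Finset.sum_add_distrib, Finset.sum_add_distrib,
                ← Finset.mul_sum, ← Finset.mul_sum, ← Finset.mul_sum]
          _ = _ := by ring
      have hL : (∑ i, dd i x) = K * τ^2 * ‖x‖⁻¹^2 * w x - ft x := by
        have hft : ft x = -(∑ i, dd i x) + K * τ^2 * ‖x‖⁻¹^2 * w x := rfl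
        linarith
      have hQ0 : (0:ℝ) ≤ ∑ i, (d i x)^2 := Finset.sum_nonneg fun i _ => sq_nonneg _
      have hS2 : (∑ i, x i * d i x)^2 ≤ ‖x‖^2 * ∑ i, (d i x)^2 := by
        have hcs := Finset.sum_mul_sq_le_sq_mul_sq Finset.univ (fun i => x i) (fun i => d i x)
        have hnorm : ∑ i, (x i)^2 = ‖x‖^2 := by
          rw [EuclideanSpace.norm_eq, Real.sq_sqrt (by positivity)]
          exact Finset.sum_congr rfl fun i _ => by rw [Real.norm_eq_abs, sq_abs]
        calc (∑ i, x i * d i x)^2 ≤ (∑ i, (x i)^2) * (∑ i, (d i x)^2) := hcs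
          _ = ‖x‖^2 * ∑ i, (d i x)^2 := by rw [hnorm]
      have key := scalar_ineq C K τ δ (φ x) (deriv h (-Real.log ‖x‖)) ‖x‖ ‖x‖⁻¹
        (w x) (∑ i, x i * d i x) (∑ i, (d i x)^2) (∑ i, dd i x) (ft x)
        hδdef hδ hτ0 hr hu hur (hφpos x) hp0 hpC hQ0 hS2
        hL
      have hηx : (δ/2) * η x = (δ/2) * (φ x * τ^2 * (w x)^2 * ‖x‖⁻¹^2) := rfl
      have hψx : (1/(2*δ)) * ψ x = (1/(2*δ)) * (φ x * ‖x‖^2 * (ft x)^2 / τ^2) := rfl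
      rw [hηx, hψx, hGx]
      calc (δ/2) * (φ x * τ^2 * (w x)^2 * ‖x‖⁻¹^2)
          = (δ/2) * (φ x * τ^2 * (w x)^2 * ‖x‖⁻¹^2) := rfl
        _ ≤ ((-2 * deriv h (-Real.log ‖x‖) * ‖x‖⁻¹^2 * φ x) * (w x * ∑ i, x i * d i x)
              + φ x * (∑ i, (d i x)^2) + φ x * (w x * ∑ i, dd i x))
            + (1/(2*δ)) * (φ x * ‖x‖^2 * (ft x)^2 / τ^2) := by
            have := key
            linarith [this]
    · -- off the support everything relevant vanishes
      have hGx : G x = 0 := by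
        rw [hGdef]
        exact Finset.sum_eq_zero fun i _ => hdF0 x hx i
      have hηx : η x = 0 := by simp [hηdef, hw0 x hx]
      have hψx : (0:ℝ) ≤ ψ x := by
        have := (hφpos x).le
        simp only [hψdef]
        positivity
      rw [hGx, hηx]
      have : (0:ℝ) ≤ (1/(2*δ)) * ψ x := by positivity
      linarith
  -- integrate the pointwise inequality
  have hmono : ∫ x, (δ/2) * η x ≤ ∫ x, (G x + (1/(2*δ)) * ψ x) :=
    integral_mono (hηint.const_mul (δ/2))
      (hGint.add (hψint.const_mul (1/(2*δ)))) (fun x => hPW x)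
  rw [MeasureTheory.integral_const_mul, integral_add hGint (hψint.const_mul _), MeasureTheory.integral_const_mul,
    hGzero, zero_add] at hmono
  -- replace f by ft in the right-hand side (they agree a.e.)
  haveI : Nonempty (Fin n) := ⟨⟨0, by omega⟩⟩
  have hsing : (volume : Measure (EuclideanSpace ℝ (Fin n))) {(0:EuclideanSpace ℝ (Fin n))} = 0 :=
    measure_singleton _
  have hae : ∫ x, φ x * ‖x‖^2 * (f x)^2 / τ^2 = ∫ x, ψ x := by
    apply integral_congr_ae
    filter_upwards [compl_mem_ae_iff.mpr hsing] with x hx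
    have hxne : x ≠ (0:EuclideanSpace ℝ (Fin n)) := hx
    have hfx : ft x = f x := heq x hxne
    simp only [hψdef]
    rw [hfx]
  have hψnn : 0 ≤ ∫ x, ψ x := by
    apply integral_nonneg
    intro x
    have := (hφpos x).le
    simp only [hψdef]
    positivity
  have hfinal : (∫ x, η x) ≤ 1/δ^2 * ∫ x, ψ x := by
    have e1 : (∫ x, η x) = (2/δ) * ((δ/2) * ∫ x, η x) := by
      field_simp
    have e2 : (2/δ) * ((1/(2*δ)) * ∫ x, ψ x) = 1/δ^2 * ∫ x, ψ x := by
      field_simp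
    calc (∫ x, η x) = (2/δ) * ((δ/2) * ∫ x, η x) := e1
      _ ≤ (2/δ) * ((1/(2*δ)) * ∫ x, ψ x) :=
          mul_le_mul_of_nonneg_left hmono (by positivity)
      _ = 1/δ^2 * ∫ x, ψ x := e2
  calc (∫ x, η x) ≤ 1/δ^2 * ∫ x, ψ x := hfinal
    _ = 1/δ^2 * ∫ x, φ x * ‖x‖^2 * (f x)^2 / τ^2 := by rw [hae]
end
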